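/- Fix Γ > 0. For β, δ > 0 let u_β(Δ) = √((1/π)β/(β²/4 + Δ²)) and define the vector v(β, δ) = (a₊, b, b, a₋) ∈ ℂ⁴, where a± = u_β(0)/(Γ/2 ± 2iδ) and b = u_β(2δ)/(Γ/2). Then lim_{δ→∞} lim_{β→∞} |2b|² / (2 ‖v(β,δ)‖²) = 1, i.e. in the iterated limit β/Γ → ∞ followed by δ/Γ → ∞ the normalized post-selected two-photon state converges to the Bell state φ⁺ = (|ω_a, ω_b⟩ + |ω_b, ω_a⟩)/√2. -/

import Mathlib

open Real Filter

/-- Lorentzian coupling envelope `u_β(Δ) = √((1/π) β/(β²/4 + Δ²))`. -/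
noncomputable def lorentzEnvelope (β Δ : ℝ) : ℝ :=
  Real.sqrt ((1 / π) * (β / (β ^ 2 / 4 + Δ ^ 2)))

/-- Diagonal amplitude `a₊ = u_β(0)/(Γ/2 + 2iδ)` of the post-selected pair. -/
noncomputable def aPlus (Γ β δ : ℝ) : ℂ :=
  (lorentzEnvelope β 0 : ℂ) / ((Γ : ℂ) / 2 + 2 * Complex.I * (δ : ℂ))

/-- Diagonal amplitude `a₋ = u_β(0)/(Γ/2 − 2iδ)` of the post-selected pair. -/
noncomputable def aMinus (Γ β δ : ℝ) : ℂ :=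
  (lorentzEnvelope β 0 : ℂ) / ((Γ : ℂ) / 2 - 2 * Complex.I * (δ : ℂ))

/-- Off-diagonal amplitude `b = u_β(2δ)/(Γ/2)` of the post-selected pair. -/
noncomputable def bAmp (Γ β δ : ℝ) : ℂ :=
  (lorentzEnvelope β (2 * δ) : ℂ) / ((Γ : ℂ) / 2)

/-- The post-selected two-photon amplitude vector `v = (a₊, b, b, a₋) ∈ ℂ⁴`. -/
noncomputable def postVec (Γ β δ : ℝ) : EuclideanSpace ℂ (Fin 4) :=
  (WithLp.equiv 2 (Fin 4 → ℂ)).symm ![aPlus Γ β δ, bAmp Γ β δ, bAmp Γ β δ, aMinus Γ β δ]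

/-! The overlap equals `(1 + |a₊|²/|b|²)⁻¹`, and `|a₊|²/|b|²` factors as
`u_β(0)²/u_β(2δ)² = 1 + 16δ²/β²`, which tends to `1` as `β → ∞` (the envelope flattens),
times the detuning factor `(Γ/2)²/((Γ/2)² + (2δ)²)`, which tends to `0` as `δ → ∞`. -/

lemma lorentzEnvelope_sq {β : ℝ} (hβ : 0 ≤ β) (Δ : ℝ) :
    lorentzEnvelope β Δ ^ 2 = β / (π * (β ^ 2 / 4 + Δ ^ 2)) := by
  rw [lorentzEnvelope, sq_sqrt (by positivity)]
  field_simp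

lemma lorentzEnvelope_pos {β : ℝ} (hβ : 0 < β) (Δ : ℝ) : 0 < lorentzEnvelope β Δ :=
  sqrt_pos.mpr (by positivity)

lemma lorentzEnvelope_sq_div_sq {β : ℝ} (hβ : 0 < β) (Δ : ℝ) :
    lorentzEnvelope β 0 ^ 2 / lorentzEnvelope β Δ ^ 2 = 1 + 4 * Δ ^ 2 / β ^ 2 := by
  rw [lorentzEnvelope_sq hβ.le, lorentzEnvelope_sq hβ.le]
  field_simp
  ring

lemma tendsto_lorentzEnvelope_sq_div_sq (Δ : ℝ) :
    Tendsto (fun β => lorentzEnvelope β 0 ^ 2 / lorentzEnvelope β Δ ^ 2) atTop (nhds 1) := by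
  have h : Tendsto (fun β : ℝ => 1 + 4 * Δ ^ 2 / β ^ 2) atTop (nhds (1 + 0)) :=
    (tendsto_const_nhds.div_atTop (tendsto_pow_atTop two_ne_zero)).const_add 1
  rw [add_zero] at h
  exact h.congr' <| (eventually_gt_atTop 0).mono fun β hβ =>
    (lorentzEnvelope_sq_div_sq hβ Δ).symm

noncomputable def detuningFactor (Γ δ : ℝ) : ℝ :=
  (Γ / 2) ^ 2 / ((Γ / 2) ^ 2 + (2 * δ) ^ 2)

lemma detuningFactor_nonneg (Γ δ : ℝ) : 0 ≤ detuningFactor Γ δ := by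
  unfold detuningFactor
  positivity

lemma tendsto_detuningFactor_atTop (Γ : ℝ) : Tendsto (detuningFactor Γ) atTop (nhds 0) :=
  tendsto_const_nhds.div_atTop <| tendsto_atTop_add_const_left _ _ <|
    (tendsto_pow_atTop two_ne_zero).comp (tendsto_id.const_mul_atTop two_pos)

lemma norm_aPlus_sq (Γ β δ : ℝ) :
    ‖aPlus Γ β δ‖ ^ 2 = lorentzEnvelope β 0 ^ 2 / ((Γ / 2) ^ 2 + (2 * δ) ^ 2) := by
  have hden : (Γ : ℂ) / 2 + 2 * Complex.I * δ =
      ((Γ / 2 : ℝ) : ℂ) + ((2 * δ : ℝ) : ℂ) * Complex.I := by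
    push_cast
    ring
  rw [aPlus, hden, norm_div, div_pow, Complex.sq_norm (_ + _), Complex.normSq_add_mul_I,
    Complex.norm_real, norm_eq_abs, sq_abs]

lemma aMinus_eq_conj_aPlus (Γ β δ : ℝ) : aMinus Γ β δ = (starRingEnd ℂ) (aPlus Γ β δ) := by
  simp [aMinus, aPlus, map_div₀, Complex.conj_ofNat, sub_eq_add_neg]

lemma norm_bAmp_sq (Γ β δ : ℝ) :
    ‖bAmp Γ β δ‖ ^ 2 = lorentzEnvelope β (2 * δ) ^ 2 / (Γ / 2) ^ 2 := by
  rw [bAmp, norm_div, div_pow]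
  simp [div_pow, sq_abs]

lemma norm_postVec_sq (Γ β δ : ℝ) :
    ‖postVec Γ β δ‖ ^ 2 = 2 * ‖aPlus Γ β δ‖ ^ 2 + 2 * ‖bAmp Γ β δ‖ ^ 2 := by
  rw [EuclideanSpace.norm_eq, sq_sqrt (by positivity)]
  simp [postVec, Fin.sum_univ_four, aMinus_eq_conj_aPlus]
  ring

lemma bellOverlap_eq {Γ β : ℝ} (hΓ : Γ ≠ 0) (hβ : 0 < β) (δ : ℝ) :
    ‖2 * bAmp Γ β δ‖ ^ 2 / (2 * ‖postVec Γ β δ‖ ^ 2) =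
      (1 + lorentzEnvelope β 0 ^ 2 / lorentzEnvelope β (2 * δ) ^ 2 * detuningFactor Γ δ)⁻¹ := by
  have hu := (lorentzEnvelope_pos hβ (2 * δ)).ne'
  have hratio : ‖aPlus Γ β δ‖ ^ 2 / ‖bAmp Γ β δ‖ ^ 2 =
      lorentzEnvelope β 0 ^ 2 / lorentzEnvelope β (2 * δ) ^ 2 * detuningFactor Γ δ := by
    rw [norm_aPlus_sq, norm_bAmp_sq, detuningFactor]
    field_simp
  have hb : ‖bAmp Γ β δ‖ ^ 2 ≠ 0 := by
    rw [norm_bAmp_sq]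
    positivity
  rw [← hratio, norm_mul, mul_pow, norm_postVec_sq, Complex.norm_two]
  generalize ‖aPlus Γ β δ‖ ^ 2 = A at *
  generalize ‖bAmp Γ β δ‖ ^ 2 = B at *
  field_simp
  ring

/-- In the iterated limit `β/Γ → ∞` followed by `δ/Γ → ∞`, the normalized
post-selected two-photon state converges to the Bell state
`φ⁺ = (|ω_a ω_b⟩ + |ω_b ω_a⟩)/√2`:
`lim_{δ→∞} lim_{β→∞} |2b|²/(2‖v‖²) = 1`. -/
theorem postselected_state_bell_phi_plus (Γ : ℝ) (hΓ : 0 < Γ) :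
    ∃ L : ℝ → ℝ,
      (∀ δ : ℝ, 0 < δ →
        Tendsto (fun β : ℝ =>
            ‖2 * bAmp Γ β δ‖ ^ 2 / (2 * ‖postVec Γ β δ‖ ^ 2))
          atTop (nhds (L δ)))
      ∧ Tendsto L atTop (nhds 1) := by
  refine ⟨fun δ => (1 + detuningFactor Γ δ)⁻¹, fun δ _ => ?_, ?_⟩
  · have hlim := (((tendsto_lorentzEnvelope_sq_div_sq (2 * δ)).mul_const
      (detuningFactor Γ δ)).const_add 1).inv₀ (by linarith [detuningFactor_nonneg Γ δ])
    rw [one_mul] at hlim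
    exact hlim.congr' <| (eventually_gt_atTop 0).mono fun β hβ =>
      (bellOverlap_eq hΓ.ne' hβ δ).symm
  · simpa using ((tendsto_detuningFactor_atTop Γ).const_add 1).inv₀ (by norm_num)
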